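/- arXiv:2311.01888 — 2 statements merged into one kernel-verified Lean document; each statement's English description precedes it below -/
import Mathlib

section
/- The function M asymptotically approximates the absolute value function: lim_{a→+∞} (M(a) − a) = 0 and lim_{a→−∞} (M(a) + a) = 0. -/
open MeasureTheory Real

/-- The error function `erf x = (2/sqrt pi) * integral_0^x exp(-t^2) dt`. -/
noncomputable def erf (x : ℝ) : ℝ :=
  (2 / Real.sqrt Real.pi) * ∫ t in (0:ℝ)..x, Real.exp (-t ^ 2)

/-- `M a = sqrt (2/pi) * exp (-a^2/2) + a * erf (a/sqrt 2)`. -/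
noncomputable def Mfun (a : ℝ) : ℝ :=
  Real.sqrt (2 / Real.pi) * Real.exp (-a ^ 2 / 2) + a * erf (a / Real.sqrt 2)

open Filter Set

lemma exp_sq_integrable : Integrable (fun t : ℝ => Real.exp (-t ^ 2)) := by
  have := integrable_exp_neg_mul_sq (b := 1) one_pos
  simpa using this

lemma split_integral {x : ℝ} (hx : 0 ≤ x) :
    ∫ t in (0:ℝ)..x, Real.exp (-t ^ 2)
      = (∫ t in Set.Ioi (0:ℝ), Real.exp (-t ^ 2)) - ∫ t in Set.Ioi x, Real.exp (-t ^ 2) := by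
  rw [intervalIntegral.integral_of_le hx, eq_sub_iff_add_eq,
    ← MeasureTheory.setIntegral_union (Set.Ioc_disjoint_Ioi le_rfl) measurableSet_Ioi
      exp_sq_integrable.integrableOn exp_sq_integrable.integrableOn,
    Set.Ioc_union_Ioi_eq_Ioi hx]

lemma integral_Ioi_exp_sq_zero :
    ∫ t in Set.Ioi (0:ℝ), Real.exp (-t ^ 2) = Real.sqrt Real.pi / 2 := by
  have := integral_gaussian_Ioi 1
  simpa using this

lemma hasDeriv_aux (t : ℝ) :
    HasDerivAt (fun t : ℝ => -(Real.exp (-t ^ 2) / 2)) (t * Real.exp (-t ^ 2)) t := by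
  have h1 : HasDerivAt (fun t : ℝ => -t ^ 2) (-(2 * t ^ 1)) t := (hasDerivAt_pow 2 t).neg
  have h2 : HasDerivAt (fun t : ℝ => -(Real.exp (-t ^ 2) / 2)) _ t := (h1.exp.div_const 2).neg
  convert h2 using 1
  ring

lemma tendsto_exp_neg_sq : Tendsto (fun t : ℝ => Real.exp (-t ^ 2)) atTop (nhds 0) :=
  Real.tendsto_exp_atBot.comp (by
    have : Tendsto (fun t : ℝ => t ^ 2) atTop atTop := tendsto_pow_atTop (by norm_num)
    exact tendsto_neg_atBot_iff.mpr this)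

lemma integral_Ioi_mul_exp {x : ℝ} (hx : 0 ≤ x) :
    ∫ t in Set.Ioi x, t * Real.exp (-t ^ 2) = Real.exp (-x ^ 2) / 2 := by
  have h := integral_Ioi_of_hasDerivAt_of_nonneg' (a := x)
    (fun t _ => hasDeriv_aux t)
    (fun t ht => mul_nonneg (hx.trans ht.le) (Real.exp_pos _).le)
    ((tendsto_exp_neg_sq.div_const 2).neg)
  rw [h]; ring

lemma tail_nonneg (x : ℝ) : 0 ≤ ∫ t in Set.Ioi x, Real.exp (-t ^ 2) :=
  setIntegral_nonneg measurableSet_Ioi (fun t _ => (Real.exp_pos _).le)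

lemma tail_le {x : ℝ} (hx : 1 ≤ x) :
    ∫ t in Set.Ioi x, Real.exp (-t ^ 2) ≤ Real.exp (-x ^ 2) / 2 := by
  rw [← integral_Ioi_mul_exp (le_trans zero_le_one hx)]
  apply setIntegral_mono_on exp_sq_integrable.integrableOn ?_ measurableSet_Ioi
  · intro t ht
    have ht1 : 1 ≤ t := hx.trans (le_of_lt ht)
    nlinarith [Real.exp_pos (-t ^ 2)]
  · exact integrableOn_Ioi_deriv_of_nonneg' (fun t _ => hasDeriv_aux t)
      (fun t ht => mul_nonneg ((le_trans zero_le_one hx).trans ht.le) (Real.exp_pos _).le)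
      ((tendsto_exp_neg_sq.div_const 2).neg)

lemma erf_eq {x : ℝ} (hx : 0 ≤ x) :
    erf x = 1 - (2 / Real.sqrt Real.pi) * ∫ t in Set.Ioi x, Real.exp (-t ^ 2) := by
  have hpi : Real.sqrt Real.pi ≠ 0 := by positivity
  rw [erf, split_integral hx, integral_Ioi_exp_sq_zero]
  field_simp

lemma sqrt_two_sq : (Real.sqrt 2) ^ 2 = 2 := Real.sq_sqrt (by norm_num)

lemma div_sqrt_two_sq (a : ℝ) : -(a / Real.sqrt 2) ^ 2 = -a ^ 2 / 2 := by
  rw [div_pow, sqrt_two_sq]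
  ring

lemma Mfun_atTop : Filter.Tendsto (fun a : ℝ => Mfun a - a) Filter.atTop (nhds 0) := by
  have hsplit : ∀ a : ℝ, Mfun a - a
      = Real.sqrt (2 / Real.pi) * Real.exp (-a ^ 2 / 2) + a * (erf (a / Real.sqrt 2) - 1) := by
    intro a; rw [Mfun]; ring
  have hexp : Tendsto (fun a : ℝ => Real.exp (-a ^ 2 / 2)) atTop (nhds 0) := by
    apply Real.tendsto_exp_atBot.comp
    have h : Tendsto (fun a : ℝ => a ^ 2 / 2) atTop atTop :=
      (tendsto_pow_atTop (by norm_num)).atTop_div_const (by norm_num)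
    exact (tendsto_neg_atBot_iff.mpr h).congr (fun a => by ring)
  have h1 : Tendsto (fun a : ℝ => Real.sqrt (2 / Real.pi) * Real.exp (-a ^ 2 / 2))
      atTop (nhds 0) := by
    simpa using hexp.const_mul (Real.sqrt (2 / Real.pi))
  -- the bounding function
  have hbound : Tendsto (fun a : ℝ => (1 / Real.sqrt Real.pi) * (a * Real.exp (-a)))
      atTop (nhds 0) := by
    simpa using (by simpa using Real.tendsto_pow_mul_exp_neg_atTop_nhds_zero 1 :
      Tendsto (fun a : ℝ => a * Real.exp (-a)) atTop (nhds 0)).const_mul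
      (1 / Real.sqrt Real.pi)
  have h2 : Tendsto (fun a : ℝ => a * (1 - erf (a / Real.sqrt 2))) atTop (nhds 0) := by
    apply tendsto_of_tendsto_of_tendsto_of_le_of_le' tendsto_const_nhds hbound
    · filter_upwards [eventually_ge_atTop (Real.sqrt 2)] with a ha
      have hx : (1:ℝ) ≤ a / Real.sqrt 2 := by
        rw [le_div_iff₀ (by positivity)]; simpa using ha
      have hx0 : (0:ℝ) ≤ a / Real.sqrt 2 := by linarith
      rw [erf_eq hx0]
      have := tail_nonneg (a / Real.sqrt 2)
      have ha0 : 0 ≤ a := le_trans (by positivity) ha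
      have hpi : 0 < Real.sqrt Real.pi := by positivity
      have : 0 ≤ (2 / Real.sqrt Real.pi) * ∫ t in Set.Ioi (a / Real.sqrt 2),
          Real.exp (-t ^ 2) := by positivity
      nlinarith
    · filter_upwards [eventually_ge_atTop (max (Real.sqrt 2) 2)] with a ha
      have ha2 : Real.sqrt 2 ≤ a := le_trans (le_max_left _ _) ha
      have ha2' : (2:ℝ) ≤ a := le_trans (le_max_right _ _) ha
      have hx : (1:ℝ) ≤ a / Real.sqrt 2 := by
        rw [le_div_iff₀ (by positivity)]; simpa using ha2
      have hx0 : (0:ℝ) ≤ a / Real.sqrt 2 := by linarith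
      have ha0 : (0:ℝ) ≤ a := by linarith
      have hpi : 0 < Real.sqrt Real.pi := by positivity
      rw [erf_eq hx0]
      have htail := tail_le hx
      rw [div_sqrt_two_sq a] at htail
      have h2pi : (0:ℝ) ≤ 2 / Real.sqrt Real.pi := by positivity
      have key : a * (1 - (1 - (2 / Real.sqrt Real.pi) *
          ∫ t in Set.Ioi (a / Real.sqrt 2), Real.exp (-t ^ 2)))
          ≤ a * ((2 / Real.sqrt Real.pi) * (Real.exp (-a ^ 2 / 2) / 2)) := by
        calc a * (1 - (1 - (2 / Real.sqrt Real.pi) *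
              ∫ t in Set.Ioi (a / Real.sqrt 2), Real.exp (-t ^ 2)))
            = (a * (2 / Real.sqrt Real.pi)) *
              ∫ t in Set.Ioi (a / Real.sqrt 2), Real.exp (-t ^ 2) := by ring
          _ ≤ (a * (2 / Real.sqrt Real.pi)) * (Real.exp (-a ^ 2 / 2) / 2) :=
              mul_le_mul_of_nonneg_left htail (mul_nonneg ha0 h2pi)
          _ = a * ((2 / Real.sqrt Real.pi) * (Real.exp (-a ^ 2 / 2) / 2)) := by ring
      refine key.trans ?_
      -- now show a * ((2/√π) * (exp(-a²/2)/2)) ≤ (1/√π) * (a * exp(-a))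
      have hexple : Real.exp (-a ^ 2 / 2) ≤ Real.exp (-a) := by
        apply Real.exp_le_exp.mpr
        nlinarith
      have : a * ((2 / Real.sqrt Real.pi) * (Real.exp (-a ^ 2 / 2) / 2))
          = (1 / Real.sqrt Real.pi) * (a * Real.exp (-a ^ 2 / 2)) := by ring
      rw [this]
      have h1pi : (0:ℝ) ≤ 1 / Real.sqrt Real.pi := by positivity
      apply mul_le_mul_of_nonneg_left _ h1pi
      exact mul_le_mul_of_nonneg_left hexple ha0
  have h2' : Tendsto (fun a : ℝ => a * (erf (a / Real.sqrt 2) - 1)) atTop (nhds 0) := by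
    have := h2.neg
    simp only [neg_zero] at this
    convert this using 2 with a
    ring
  have := h1.add h2'
  rw [add_zero] at this
  exact this.congr (fun a => (hsplit a).symm)

lemma erf_odd (x : ℝ) : erf (-x) = - erf x := by
  rw [erf, erf, ← mul_neg]
  congr 1
  have h : (∫ t in (0:ℝ)..(-x), Real.exp (-t ^ 2))
      = ∫ t in (0:ℝ)..(-x), Real.exp (-(-t) ^ 2) := by
    apply intervalIntegral.integral_congr
    intro t _
    ring_nf
  rw [h, intervalIntegral.integral_comp_neg (f := fun t => Real.exp (-t ^ 2)),
    neg_neg, neg_zero, intervalIntegral.integral_symm]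

lemma Mfun_even (a : ℝ) : Mfun (-a) = Mfun a := by
  rw [Mfun, Mfun, show -a / Real.sqrt 2 = -(a / Real.sqrt 2) from neg_div _ _, erf_odd,
    show (-a) ^ 2 = a ^ 2 by ring]
  ring

/-- `M` asymptotically approximates the absolute value function:
`M a - a` tends to `0` at `+infinity` and `M a + a` tends to `0` at `-infinity`. -/
theorem Mfun_asymptotic :
    Filter.Tendsto (fun a : ℝ => Mfun a - a) Filter.atTop (nhds 0) ∧
      Filter.Tendsto (fun a : ℝ => Mfun a + a) Filter.atBot (nhds 0) := by
  refine ⟨Mfun_atTop, ?_⟩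
  have := Mfun_atTop.comp tendsto_neg_atBot_atTop
  refine this.congr (fun a => ?_)
  simp [Function.comp, Mfun_even, sub_neg_eq_add]
end

section
/- (Closed form of the classical sparse coding ELBO with Gaussian variational posteriors.) Consider data x¹,…,x^N ∈ ℝ^D, a matrix W ∈ ℝ^{D×H}, a variance σ² > 0, the standard Laplace prior p(z) = Π_{h=1}^H (1/2)·exp(−|z_h|), the Gaussian observation density p(x|z) = (2πσ²)^{−D/2}·exp(−‖x − Wz‖²/(2σ²)), and Gaussian variational distributions q_n = N(ν^{(n)}, T^{(n)}) with positive definite covariances T^{(n)} whose diagonal entries satisfy T^{(n)}_{hh} > 0. Then the ELBO ℒ = (1/N)·Σ_n ∫ q_n(z)·[ log p(x^{(n)}|z) + log p(z) − log q_n(z) ] dz equals the analytic expression −(D/2)·log(2πσ²) − (1/(2σ²))·(1/N)·Σ_n [ tr(Wᵀ·W·T^{(n)}) + ‖W·ν^{(n)} − x^{(n)}‖² ] − H·log 2 − (1/N)·Σ_n Σ_{h=1}^H √(T^{(n)}_{hh})·M( ν_h^{(n)} / √(T^{(n)}_{hh}) ) + (1/N)·Σ_n (1/2)·log det(2πe·T^{(n)}).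 -/
open MeasureTheory Matrix Real Set Filter

/-- The standard factorized Laplace prior density `p(z) = prod_h (1/2) * exp(-|z_h|)`. -/
noncomputable def stdLaplacePdf {H : ℕ} (z : Fin H → ℝ) : ℝ :=
  ∏ h, (1 / 2 : ℝ) * Real.exp (-|z h|)

/-- Gaussian observation density `p(x|z) = (2*pi*s)^(-D/2) * exp(-||x - W z||^2/(2*s))`. -/
noncomputable def gaussObsPdf {D H : ℕ} (W : Matrix (Fin D) (Fin H) ℝ) (s : ℝ)
    (x : Fin D → ℝ) (z : Fin H → ℝ) : ℝ :=
  (2 * Real.pi * s) ^ (-(D : ℝ) / 2) *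
    Real.exp (-(∑ i, (x i - W.mulVec z i) ^ 2) / (2 * s))

/-- Multivariate Gaussian density on `R^H` with mean `nu` and covariance `T`. -/
noncomputable def gaussPdfMulti {H : ℕ} (ν : Fin H → ℝ) (T : Matrix (Fin H) (Fin H) ℝ)
    (z : Fin H → ℝ) : ℝ :=
  (Real.sqrt ((2 * Real.pi) ^ (H : ℕ) * T.det))⁻¹ *
    Real.exp (-(∑ i, (z i - ν i) * (T⁻¹.mulVec fun j => z j - ν j) i) / 2)


lemma integrable_gauss : Integrable fun t : ℝ => Real.exp (-t ^ 2 / 2) := by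
  have := integrable_exp_neg_mul_sq (b := (1/2 : ℝ)) (by norm_num)
  convert this using 2 with t
  ring_nf

lemma integrable_mul_gauss : Integrable fun t : ℝ => t * Real.exp (-t ^ 2 / 2) := by
  have := integrable_mul_exp_neg_mul_sq (b := (1/2 : ℝ)) (by norm_num)
  convert this using 2 with t
  ring_nf

lemma integrable_sq_mul_gauss : Integrable fun t : ℝ => t ^ 2 * Real.exp (-t ^ 2 / 2) := by
  have := integrable_rpow_mul_exp_neg_mul_sq (b := (1/2 : ℝ)) (by norm_num)
    (s := (2:ℝ)) (by norm_num)
  have h2 : ∀ t : ℝ, t ^ (2:ℝ) = t ^ (2:ℕ) := fun t => by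
    rw [← Real.rpow_natCast t 2]; norm_num
  convert this using 2 with t
  rw [h2]; ring_nf

lemma int_gauss : ∫ t : ℝ, Real.exp (-t ^ 2 / 2) = Real.sqrt (2 * π) := by
  have := integral_gaussian (1/2 : ℝ)
  rw [show π / (1/2 : ℝ) = 2 * π by ring] at this
  rw [← this]
  congr 1 with t
  ring_nf

lemma int_mul_gauss : ∫ t : ℝ, t * Real.exp (-t ^ 2 / 2) = 0 := by
  have h := MeasureTheory.integral_neg_eq_self (fun t : ℝ => t * Real.exp (-t ^ 2 / 2)) volume
  have key : (fun t : ℝ => (-t) * Real.exp (-(-t) ^ 2 / 2))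
      = fun t : ℝ => -(t * Real.exp (-t ^ 2 / 2)) := by
    funext t; rw [neg_sq]; ring
  rw [key, integral_neg] at h
  linarith

lemma tendsto_gauss : Tendsto (fun x : ℝ => Real.exp (-x ^ 2 / 2)) atTop (nhds 0) := by
  apply Real.tendsto_exp_atBot.comp
  have h1 : Tendsto (fun x : ℝ => x ^ 2 / 2) atTop atTop :=
    (tendsto_pow_atTop (two_ne_zero)).atTop_div_const (by norm_num)
  have := tendsto_neg_atTop_atBot.comp h1
  refine this.congr fun x => by simp [Function.comp]; ring

lemma tendsto_mul_gauss : Tendsto (fun x : ℝ => x * Real.exp (-x ^ 2 / 2)) atTop (nhds 0) := by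
  apply squeeze_zero' (g := fun x : ℝ => x * Real.exp (-x))
  · filter_upwards [eventually_ge_atTop (0:ℝ)] with x hx
    positivity
  · filter_upwards [eventually_ge_atTop (2:ℝ)] with x hx
    have hx0 : (0:ℝ) ≤ x := by linarith
    apply mul_le_mul_of_nonneg_left _ hx0
    apply Real.exp_le_exp.2
    nlinarith
  · have := Real.tendsto_pow_mul_exp_neg_atTop_nhds_zero 1
    simpa using this

lemma J_lem (c : ℝ) :
    ∫ x in Ioi c, x * Real.exp (-x ^ 2 / 2) = Real.exp (-c ^ 2 / 2) := by
  have hderiv : ∀ x ∈ Ici c, HasDerivAt (fun x : ℝ => -Real.exp (-x ^ 2 / 2))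
      (x * Real.exp (-x ^ 2 / 2)) x := by
    intro x _
    have h1 : HasDerivAt (fun x : ℝ => -x ^ 2 / 2) (-x) x := by
      have := ((hasDerivAt_pow 2 x).neg.div_const 2)
      simpa using this.congr_deriv (by push_cast; ring)
    have := (h1.exp).neg
    exact this.congr_deriv (by ring)
  have := integral_Ioi_of_hasDerivAt_of_tendsto' hderiv
    (integrable_mul_gauss.integrableOn) (tendsto_gauss.neg)
  rw [this]; ring

lemma int_Ioi_gauss : ∫ x in Ioi (0:ℝ), Real.exp (-x ^ 2 / 2) = Real.sqrt (2 * π) / 2 := by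
  have := integral_gaussian_Ioi (1/2 : ℝ)
  rw [show π / (1/2 : ℝ) = 2 * π by ring] at this
  rw [← this]
  congr 1 with x
  ring_nf

lemma int_sq_mul_gauss : ∫ t : ℝ, t ^ 2 * Real.exp (-t ^ 2 / 2) = Real.sqrt (2 * π) := by
  have habs : ∫ t : ℝ, t ^ 2 * Real.exp (-t ^ 2 / 2)
      = 2 * ∫ t in Ioi (0:ℝ), t ^ 2 * Real.exp (-t ^ 2 / 2) := by
    rw [← _root_.integral_comp_abs (f := fun t => t ^ 2 * Real.exp (-t ^ 2 / 2))]
    congr 1 with t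
    rw [sq_abs]
  have hderiv : ∀ x ∈ Ici (0:ℝ), HasDerivAt (fun x : ℝ => -(x * Real.exp (-x ^ 2 / 2)))
      (x ^ 2 * Real.exp (-x ^ 2 / 2) - Real.exp (-x ^ 2 / 2)) x := by
    intro x _
    have h1 : HasDerivAt (fun x : ℝ => -x ^ 2 / 2) (-x) x := by
      have := ((hasDerivAt_pow 2 x).neg.div_const 2)
      simpa using this.congr_deriv (by push_cast; ring)
    have h2 := (hasDerivAt_id x).mul h1.exp
    have := h2.neg
    exact this.congr_deriv (by simp only [id_eq]; ring)
  have hFTC := integral_Ioi_of_hasDerivAt_of_tendsto' hderiv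
    ((integrable_sq_mul_gauss.sub integrable_gauss).integrableOn) (tendsto_mul_gauss.neg)
  have hsplit : ∫ x in Ioi (0:ℝ), (x ^ 2 * Real.exp (-x ^ 2 / 2) - Real.exp (-x ^ 2 / 2))
      = (∫ x in Ioi (0:ℝ), x ^ 2 * Real.exp (-x ^ 2 / 2)) - ∫ x in Ioi (0:ℝ), Real.exp (-x ^ 2 / 2) :=
    integral_sub (integrable_sq_mul_gauss.integrableOn) (integrable_gauss.integrableOn)
  rw [hsplit, int_Ioi_gauss] at hFTC
  norm_num at hFTC
  rw [habs, Real.sqrt_mul (by norm_num : (0:ℝ) ≤ 2)]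
  linarith

lemma integrable_exp_neg_sq : Integrable fun t : ℝ => Real.exp (-t ^ 2) := by
  have := integrable_exp_neg_mul_sq (b := (1 : ℝ)) (by norm_num)
  simpa using this

lemma erf_neg (x : ℝ) : erf (-x) = -erf x := by
  have h := intervalIntegral.integral_comp_neg (a := (0:ℝ)) (b := x)
    (f := fun t => Real.exp (-t ^ 2))
  simp only [neg_sq, neg_zero] at h
  have h2 : ∫ t in (0:ℝ)..(-x), Real.exp (-t ^ 2) = -∫ t in (0:ℝ)..x, Real.exp (-t ^ 2) := by
    rw [h, intervalIntegral.integral_symm]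
  unfold erf
  rw [h2]
  ring

lemma int_zero_to (c : ℝ) :
    ∫ x in (0:ℝ)..c, Real.exp (-x ^ 2 / 2)
      = Real.sqrt (2 * π) / 2 * erf (c / Real.sqrt 2) := by
  have h2 : Real.sqrt 2 ≠ 0 := by positivity
  have hcomp : ∀ x : ℝ, Real.exp (-x ^ 2 / 2) = Real.exp (-(x / Real.sqrt 2) ^ 2) := by
    intro x
    congr 1
    rw [div_pow, Real.sq_sqrt (by norm_num : (0:ℝ) ≤ 2)]
    ring
  simp_rw [hcomp]
  rw [intervalIntegral.integral_comp_div (a := 0) (b := c)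
    (f := fun u => Real.exp (-u ^ 2)) h2]
  rw [zero_div]
  unfold erf
  rw [smul_eq_mul]
  have hπ : Real.sqrt π > 0 := Real.sqrt_pos.2 Real.pi_pos
  rw [Real.sqrt_mul (by norm_num : (0:ℝ) ≤ 2)]
  field_simp

lemma K_diff (c : ℝ) :
    (∫ x in Iic c, Real.exp (-x ^ 2 / 2)) - (∫ x in Iic (-c), Real.exp (-x ^ 2 / 2))
      = Real.sqrt (2 * π) * erf (c / Real.sqrt 2) := by
  rw [intervalIntegral.integral_Iic_sub_Iic (integrable_gauss.integrableOn)
    (integrable_gauss.integrableOn)]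
  have hsplit : ∫ x in (-c)..c, Real.exp (-x ^ 2 / 2)
      = (∫ x in (-c)..(0:ℝ), Real.exp (-x ^ 2 / 2)) + ∫ x in (0:ℝ)..c, Real.exp (-x ^ 2 / 2) :=
    (intervalIntegral.integral_add_adjacent_intervals
      integrable_gauss.intervalIntegrable integrable_gauss.intervalIntegrable).symm
  have hneg : ∫ x in (-c)..(0:ℝ), Real.exp (-x ^ 2 / 2)
      = ∫ x in (0:ℝ)..c, Real.exp (-x ^ 2 / 2) := by
    have h := intervalIntegral.integral_comp_neg (a := (0:ℝ)) (b := c)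
      (f := fun t => Real.exp (-t ^ 2 / 2))
    simp only [neg_sq, neg_zero] at h
    rw [← h]
  rw [hsplit, hneg, int_zero_to]
  ring

lemma K_lem (c : ℝ) : ∫ x in Iic c, Real.exp (-x ^ 2 / 2)
    = ∫ x in Ioi (-c), Real.exp (-x ^ 2 / 2) := by
  have h := integral_comp_neg_Ioi (-c) (fun x => Real.exp (-x ^ 2 / 2))
  simp only [neg_sq, neg_neg] at h
  rw [← h]

lemma int_abs_sub_gauss (c : ℝ) (hint : Integrable fun x : ℝ => |x - c| * Real.exp (-x ^ 2 / 2)) :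
    ∫ x : ℝ, |x - c| * Real.exp (-x ^ 2 / 2)
      = 2 * Real.exp (-c ^ 2 / 2) + Real.sqrt (2 * π) * c * erf (c / Real.sqrt 2) := by
  have hIic : MeasurableSet (Iic c) := measurableSet_Iic
  have hsplit := (MeasureTheory.integral_add_compl hIic hint).symm
  rw [compl_Iic] at hsplit
  have hIicval : ∫ x in Iic c, |x - c| * Real.exp (-x ^ 2 / 2)
      = c * (∫ x in Iic c, Real.exp (-x ^ 2 / 2)) + Real.exp (-c ^ 2 / 2) := by
    have hcong : ∫ x in Iic c, |x - c| * Real.exp (-x ^ 2 / 2)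
        = ∫ x in Iic c, (c * Real.exp (-x ^ 2 / 2) - x * Real.exp (-x ^ 2 / 2)) := by
      apply setIntegral_congr_fun measurableSet_Iic
      intro x hx
      simp only [mem_Iic] at hx
      dsimp only
      rw [abs_of_nonpos (by linarith)]
      ring
    rw [hcong, integral_sub ((integrable_gauss.const_mul c).integrableOn)
      (integrable_mul_gauss.integrableOn)]
    have hxle : ∫ x in Iic c, x * Real.exp (-x ^ 2 / 2) = -Real.exp (-c ^ 2 / 2) := by
      have h := integral_comp_neg_Ioi (-c) (fun x => x * Real.exp (-x ^ 2 / 2))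
      simp only [neg_sq, neg_neg] at h
      rw [← h]
      have : ∫ x in Ioi (-c), -x * Real.exp (-x ^ 2 / 2)
          = -∫ x in Ioi (-c), x * Real.exp (-x ^ 2 / 2) := by
        rw [← integral_neg]; congr 1 with x; ring
      rw [this, J_lem, neg_sq]
    rw [hxle, MeasureTheory.integral_const_mul]
    ring
  have hIoival : ∫ x in Ioi c, |x - c| * Real.exp (-x ^ 2 / 2)
      = Real.exp (-c ^ 2 / 2) - c * (∫ x in Ioi c, Real.exp (-x ^ 2 / 2)) := by
    have hcong : ∫ x in Ioi c, |x - c| * Real.exp (-x ^ 2 / 2)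
        = ∫ x in Ioi c, (x * Real.exp (-x ^ 2 / 2) - c * Real.exp (-x ^ 2 / 2)) := by
      apply setIntegral_congr_fun measurableSet_Ioi
      intro x hx
      simp only [mem_Ioi] at hx
      dsimp only
      rw [abs_of_nonneg (by linarith)]
      ring
    rw [hcong, integral_sub (integrable_mul_gauss.integrableOn)
      ((integrable_gauss.const_mul c).integrableOn), J_lem, MeasureTheory.integral_const_mul]
  rw [hsplit, hIicval, hIoival]
  have hK : ∫ x in Ioi c, Real.exp (-x ^ 2 / 2)
      = ∫ x in Iic (-c), Real.exp (-x ^ 2 / 2) := by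
    rw [K_lem (-c), neg_neg]
  rw [hK]
  have := K_diff c
  linear_combination c * this

lemma integrable_abs_gauss (m s : ℝ) :
    Integrable fun x : ℝ => |m + s * x| * Real.exp (-x ^ 2 / 2) := by
  have hg : Integrable fun x : ℝ =>
      |m| * Real.exp (-x ^ 2 / 2) + |s| * (|x| * Real.exp (-x ^ 2 / 2)) := by
    apply (integrable_gauss.const_mul _).add
    apply Integrable.const_mul
    have := integrable_mul_gauss.abs
    refine this.congr (Eventually.of_forall fun x => ?_)
    dsimp only
    rw [abs_mul, abs_of_nonneg (Real.exp_pos _).le]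
  apply hg.mono'
  · apply Continuous.aestronglyMeasurable
    exact (continuous_const.add (continuous_const.mul continuous_id)).abs.mul
      (continuous_id.pow 2 |>.neg.div_const 2).rexp
  · refine Eventually.of_forall fun x => ?_
    rw [Real.norm_eq_abs, abs_mul, abs_abs, abs_of_nonneg (Real.exp_pos _).le]
    have h1 : |m + s * x| ≤ |m| + |s| * |x| := by
      calc |m + s * x| ≤ |m| + |s * x| := abs_add_le _ _
      _ = |m| + |s| * |x| := by rw [abs_mul]
    nlinarith [Real.exp_pos (-x ^ 2 / 2), abs_nonneg (m + s * x), abs_nonneg x, abs_nonneg s,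
      abs_nonneg m]

lemma int_abs_gauss (m s : ℝ) (hs : 0 < s) :
    ∫ x : ℝ, |m + s * x| * Real.exp (-x ^ 2 / 2)
      = Real.sqrt (2 * π) * (s * Mfun (m / s)) := by
  obtain ⟨c, hc⟩ : ∃ c : ℝ, c = -(m / s) := ⟨_, rfl⟩
  have habs : ∀ x : ℝ, |m + s * x| = s * |x - c| := by
    intro x
    have h : s * |x - c| = |s * (x - c)| := by rw [abs_mul, abs_of_pos hs]
    rw [h]
    congr 1
    rw [hc]
    field_simp
    ring
  have hint : Integrable fun x : ℝ => |x - c| * Real.exp (-x ^ 2 / 2) := by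
    have := integrable_abs_gauss (-c) 1
    refine this.congr (Eventually.of_forall fun x => ?_)
    dsimp only
    rw [one_mul, neg_add_eq_sub]
  have h1 : ∫ x : ℝ, |m + s * x| * Real.exp (-x ^ 2 / 2)
      = s * ∫ x : ℝ, |x - c| * Real.exp (-x ^ 2 / 2) := by
    rw [← MeasureTheory.integral_const_mul]
    congr 1 with x
    rw [habs x]
    ring
  have h2 : Real.sqrt (2 * π) * Real.sqrt (2 / π) = 2 := by
    rw [← Real.sqrt_mul (by positivity)]
    rw [show 2 * π * (2 / π) = 4 by field_simp; ring]
    rw [show (4:ℝ) = 2 ^ 2 by norm_num, Real.sqrt_sq (by norm_num)]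
  rw [h1, int_abs_sub_gauss c hint]
  unfold Mfun
  have hms : m / s = -c := by rw [hc, neg_neg]
  rw [hms, show (-c / Real.sqrt 2 : ℝ) = -(c / Real.sqrt 2) by ring, erf_neg]
  simp only [neg_sq]
  linear_combination (-(s * Real.exp (-c ^ 2 / 2))) * h2

section SqrtShim

open scoped MatrixOrder

noncomputable def Matrix.PosSemidef.sqrt {n : Type*} [Fintype n] [DecidableEq n]
    {A : Matrix n n ℝ} (_ : A.PosSemidef) : Matrix n n ℝ := CFC.sqrt A

lemma Matrix.PosSemidef.sqrt_mul_self {n : Type*} [Fintype n] [DecidableEq n]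
    {A : Matrix n n ℝ} (hA : A.PosSemidef) : hA.sqrt * hA.sqrt = A :=
  CFC.sqrt_mul_sqrt_self A (Matrix.nonneg_iff_posSemidef.2 hA)

lemma Matrix.PosSemidef.posSemidef_sqrt {n : Type*} [Fintype n] [DecidableEq n]
    {A : Matrix n n ℝ} (hA : A.PosSemidef) : hA.sqrt.PosSemidef :=
  Matrix.nonneg_iff_posSemidef.1 (CFC.sqrt_nonneg A)

end SqrtShim

variable {H : ℕ}

lemma exists_factor (T : Matrix (Fin H) (Fin H) ℝ) (hT : T.PosDef) (h : Fin H) :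
    ∃ A : Matrix (Fin H) (Fin H) ℝ, A * Aᵀ = T ∧ A.det ≠ 0 ∧
      ∀ j, A h j = if j = h then Real.sqrt (T h h) else 0 := by
  classical
  obtain ⟨B, hBsymm, hBB, hBdet⟩ : ∃ B : Matrix (Fin H) (Fin H) ℝ,
      Bᵀ = B ∧ B * B = T ∧ B.det ≠ 0 := by
    refine ⟨hT.posSemidef.sqrt, ?_, hT.posSemidef.sqrt_mul_self, ?_⟩
    · rw [← conjTranspose_eq_transpose_of_trivial]
      exact hT.posSemidef.posSemidef_sqrt.1
    · intro hd
      have := hT.det_pos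
      rw [← hT.posSemidef.sqrt_mul_self, det_mul, hd, mul_zero] at this
      exact lt_irrefl _ this
  have hsymm' : ∀ i j, B i j = B j i := fun i j => congrFun (congrFun hBsymm j) i
  obtain ⟨s, hs⟩ : ∃ s : ℝ, s = Real.sqrt (T h h) := ⟨_, rfl⟩
  have hThh : T h h = ∑ j, B h j ^ 2 := by
    rw [← hBB, mul_apply]
    congr 1 with j
    rw [hsymm' j h]; ring
  have hThh_nonneg : 0 ≤ T h h := by rw [hThh]; positivity
  have hs2 : s ^ 2 = T h h := by rw [hs]; exact Real.sq_sqrt hThh_nonneg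
  obtain ⟨w, hw⟩ : ∃ w : Fin H → ℝ,
      w = fun j => B h j - s * (if j = h then 1 else 0) := ⟨_, rfl⟩
  have hwj : ∀ j, w j = B h j - s * (if j = h then 1 else 0) := fun j => by rw [hw]
  by_cases hw0 : ∀ j, w j = 0
  · refine ⟨B, by rw [hBsymm, hBB], hBdet, fun j => ?_⟩
    have h1 := hw0 j
    rw [hwj j] at h1
    have : B h j = s * (if j = h then 1 else 0) := by linarith
    rw [this, hs]
    by_cases hj : j = h <;> simp [hj]
  · push_neg at hw0
    obtain ⟨j0, hj0⟩ := hw0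
    obtain ⟨c, hc⟩ : ∃ c : ℝ, c = ∑ j, w j ^ 2 := ⟨_, rfl⟩
    have hcpos : 0 < c := by
      rw [hc]
      apply Finset.sum_pos' (fun j _ => sq_nonneg _)
      exact ⟨j0, Finset.mem_univ _, by positivity⟩
    obtain ⟨Q, hQ⟩ : ∃ Q : Matrix (Fin H) (Fin H) ℝ,
        Q = 1 - (2 / c) • vecMulVec w w := ⟨_, rfl⟩
    have hPP : vecMulVec w w * vecMulVec w w = c • vecMulVec w w := by
      ext i j
      rw [mul_apply, Matrix.smul_apply]
      simp only [vecMulVec_apply, smul_eq_mul]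
      rw [hc, Finset.sum_mul]
      congr 1 with k
      ring
    have hPsymm : (vecMulVec w w)ᵀ = vecMulVec w w := by
      ext i j; simp [vecMulVec_apply, transpose_apply]; ring
    have hQsymm : Qᵀ = Q := by
      rw [hQ, transpose_sub, transpose_smul, hPsymm, transpose_one]
    have hQQ : Q * Q = 1 := by
      rw [hQ, sub_mul, mul_sub, mul_sub, one_mul, mul_one, one_mul, smul_mul_assoc,
        mul_smul_comm, hPP, smul_smul, smul_smul]
      have hoc : 2 / c * (2 / c) * c = 2 / c + 2 / c := by
        field_simp
        ring
      rw [hoc, add_smul]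
      abel
    refine ⟨B * Q, ?_, ?_, ?_⟩
    · rw [transpose_mul, hQsymm, hBsymm, ← mul_assoc, mul_assoc B Q Q, hQQ, mul_one, hBB]
    · rw [det_mul]
      have hQdet : Q.det ≠ 0 := by
        intro hq
        have : Q.det * Q.det = 1 := by rw [← det_mul, hQQ, det_one]
        rw [hq, mul_zero] at this
        norm_num at this
      exact mul_ne_zero hBdet hQdet
    · intro j
      have hBh : ∑ k, B h k * (if k = h then (1:ℝ) else 0) = B h h := by
        simp [mul_ite]
      have hsq : ∑ k, B h k * B h k = ∑ k, B h k ^ 2 :=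
        Finset.sum_congr rfl fun k _ => (sq (B h k)).symm
      have hwb : ∑ k, B h k * w k = s ^ 2 - s * B h h := by
        simp_rw [hwj, mul_sub, Finset.sum_sub_distrib]
        have h2 : ∑ k, B h k * (s * (if k = h then (1:ℝ) else 0))
            = s * ∑ k, B h k * (if k = h then (1:ℝ) else 0) := by
          rw [Finset.mul_sum]; congr 1 with k; ring
        rw [h2, hBh, hs2, hThh, hsq]
      have hcval : c = 2 * (s ^ 2 - s * B h h) := by
        rw [hc]
        have hexp : ∀ k, w k ^ 2 = B h k ^ 2 - 2 * s * (B h k * (if k = h then (1:ℝ) else 0))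
            + s ^ 2 * (if k = h then (1:ℝ) else 0) := by
          intro k
          rw [hwj k]
          by_cases hk : k = h <;> simp [hk] <;> ring
        simp_rw [hexp]
        rw [Finset.sum_add_distrib, Finset.sum_sub_distrib]
        have h3 : ∑ k, 2 * s * (B h k * (if k = h then (1:ℝ) else 0))
            = 2 * s * B h h := by
          rw [← Finset.mul_sum, hBh]
        have h4 : ∑ k, s ^ 2 * (if k = h then (1:ℝ) else 0) = s ^ 2 := by
          simp
        rw [h3, h4, ← hThh, ← hs2]
        ring
      have hrow : (B * Q) h j = B h j - 2 / c * (∑ k, B h k * w k) * w j := by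
        rw [mul_apply, hQ]
        simp only [Matrix.sub_apply, one_apply, Matrix.smul_apply, vecMulVec_apply, smul_eq_mul, mul_sub,
          Finset.sum_sub_distrib]
        have h5 : ∑ k, B h k * (if k = j then (1:ℝ) else 0) = B h j := by
          simp [mul_ite]
        have h6 : ∑ k, B h k * (2 / c * (w k * w j))
            = 2 / c * (∑ k, B h k * w k) * w j := by
          rw [Finset.mul_sum, Finset.sum_mul]
          congr 1 with k
          ring
        rw [h5, h6]
      rw [hrow, hwb]
      have hd : s ^ 2 - s * B h h = c / 2 := by rw [hcval]; ring
      have h7 : 2 / c * (s ^ 2 - s * B h h) = 1 := by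
        rw [hd]
        field_simp
      rw [h7, one_mul, hwj j, ← hs]
      by_cases hj : j = h <;> simp [hj]

variable {H : ℕ}

lemma map_affine (A : Matrix (Fin H) (Fin H) ℝ) (hdet : A.det ≠ 0) :
    Measure.map (fun u : Fin H → ℝ => A.mulVec u) volume
      = ENNReal.ofReal |A.det⁻¹| • volume := by
  have hfun : (fun u : Fin H → ℝ => A.mulVec u) = ⇑(Matrix.toLin' A) := by
    funext u; simp [Matrix.toLin'_apply]
  rw [hfun, Real.map_matrix_volume_pi_eq_smul_volume_pi hdet]

lemma emb_affine (A : Matrix (Fin H) (Fin H) ℝ) (hdet : A.det ≠ 0) :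
    MeasurableEmbedding (fun u : Fin H → ℝ => A.mulVec u) := by
  haveI : Invertible A := A.invertibleOfIsUnitDet (isUnit_iff_ne_zero.2 hdet)
  have hcoe : ⇑(A.toLinearEquiv' ‹_›) = fun u : Fin H → ℝ => A.mulVec u := by
    funext u; rfl
  rw [← hcoe]
  exact (A.toLinearEquiv' ‹_›).toContinuousLinearEquiv.toHomeomorph.measurableEmbedding

lemma integral_comp_affine (A : Matrix (Fin H) (Fin H) ℝ) (hdet : A.det ≠ 0)
    (ν : Fin H → ℝ) (F : (Fin H → ℝ) → ℝ) :
    ∫ z : Fin H → ℝ, F z = |A.det| * ∫ u : Fin H → ℝ, F (ν + A.mulVec u) := by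
  have htrans : ∫ z : Fin H → ℝ, F z = ∫ u : Fin H → ℝ, F (ν + u) :=
    (integral_add_left_eq_self (f := F) (g := ν)).symm
  rw [htrans]
  have h1 := (emb_affine A hdet).integral_map (μ := volume) (g := fun x => F (ν + x))
  rw [← h1, map_affine A hdet, integral_smul_measure,
    ENNReal.toReal_ofReal (abs_nonneg _), smul_eq_mul, ← mul_assoc, abs_inv,
    mul_inv_cancel₀ (by simpa using hdet), one_mul]

lemma integrable_comp_affine (A : Matrix (Fin H) (Fin H) ℝ) (hdet : A.det ≠ 0)
    (ν : Fin H → ℝ) (F : (Fin H → ℝ) → ℝ)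
    (h : Integrable fun u : Fin H → ℝ => F (ν + A.mulVec u)) :
    Integrable F := by
  have h2 : Integrable (fun x => F (ν + x))
      (Measure.map (fun u : Fin H → ℝ => A.mulVec u) volume) := by
    rw [(emb_affine A hdet).integrable_map_iff]
    exact h
  rw [map_affine A hdet] at h2
  have h3 : Integrable (fun x => F (ν + x)) volume :=
    (integrable_smul_measure (by simp [hdet]) (by simp)).1 h2
  have hmp : MeasurePreserving (fun x : Fin H → ℝ => ν + x) volume volume :=
    measurePreserving_add_left volume ν
  exact (hmp.integrable_comp_emb (g := F)
    (Homeomorph.addLeft ν).measurableEmbedding).1 h3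


lemma quad_comp (A T : Matrix (Fin H) (Fin H) ℝ) (hA : A * Aᵀ = T) (hdet : A.det ≠ 0)
    (ν u : Fin H → ℝ) :
    ∑ i, ((ν + A.mulVec u) i - ν i) * (T⁻¹.mulVec fun j => (ν + A.mulVec u) j - ν j) i
      = ∑ i, u i ^ 2 := by
  have hz : (fun j => (ν + A.mulVec u) j - ν j) = A.mulVec u := by
    funext j; simp
  have hz' : ∀ i, (ν + A.mulVec u) i - ν i = A.mulVec u i := fun i => by simp
  simp_rw [hz, hz']
  have hAunit : IsUnit A.det := isUnit_iff_ne_zero.2 hdet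
  have hATunit : IsUnit Aᵀ.det := by rwa [det_transpose]
  have hkey : Aᵀ * (T⁻¹ * A) = 1 := by
    rw [← hA, Matrix.mul_inv_rev]
    rw [mul_assoc (Aᵀ)⁻¹ A⁻¹ A, Matrix.nonsing_inv_mul A hAunit, mul_one,
      Matrix.mul_nonsing_inv _ hATunit]
  have : ∑ i, A.mulVec u i * (T⁻¹.mulVec (A.mulVec u)) i
      = (A.mulVec u) ⬝ᵥ (T⁻¹.mulVec (A.mulVec u)) := rfl
  rw [this, mulVec_mulVec, dotProduct_mulVec, ← vecMul_transpose, vecMul_vecMul, hkey,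
    vecMul_one]
  exact Finset.sum_congr rfl fun i _ => (sq (u i)).symm

lemma gausspdf_comp (A T : Matrix (Fin H) (Fin H) ℝ) (hA : A * Aᵀ = T) (hdet : A.det ≠ 0)
    (ν u : Fin H → ℝ) :
    gaussPdfMulti ν T (ν + A.mulVec u)
      = (Real.sqrt ((2 * π) ^ (H : ℕ) * T.det))⁻¹ * Real.exp (-(∑ i, u i ^ 2) / 2) := by
  unfold gaussPdfMulti
  rw [quad_comp A T hA hdet]

lemma det_T_eq (A T : Matrix (Fin H) (Fin H) ℝ) (hA : A * Aᵀ = T) :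
    T.det = A.det ^ 2 := by
  rw [← hA, det_mul, det_transpose]; ring

lemma det_factor (A T : Matrix (Fin H) (Fin H) ℝ) (hA : A * Aᵀ = T) (hdet : A.det ≠ 0) :
    |A.det| * (Real.sqrt ((2 * π) ^ (H : ℕ) * T.det))⁻¹
      = ((Real.sqrt (2 * π))⁻¹) ^ (H : ℕ) := by
  have h2π : (Real.sqrt (2 * π)) ^ 2 = 2 * π := Real.sq_sqrt (by positivity)
  have hpow : Real.sqrt ((2 * π) ^ (H : ℕ)) = Real.sqrt (2 * π) ^ (H : ℕ) := by
    calc Real.sqrt ((2 * π) ^ (H : ℕ))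
        = Real.sqrt ((Real.sqrt (2 * π) ^ (H : ℕ)) ^ 2) := by
          rw [← pow_mul, mul_comm (H:ℕ) 2, pow_mul, h2π]
      _ = Real.sqrt (2 * π) ^ (H : ℕ) := Real.sqrt_sq (by positivity)
  rw [det_T_eq A T hA, Real.sqrt_mul (by positivity), Real.sqrt_sq_eq_abs, hpow, inv_pow]
  have habs : |A.det| ≠ 0 := by simpa using hdet
  have hs : Real.sqrt (2 * π) ≠ 0 := by positivity
  field_simp

lemma prod_gauss_eq (u : Fin H → ℝ) :
    ∏ h, ((Real.sqrt (2 * π))⁻¹ * Real.exp (-(u h) ^ 2 / 2))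
      = ((Real.sqrt (2 * π))⁻¹) ^ (H : ℕ) * Real.exp (-(∑ i, u i ^ 2) / 2) := by
  rw [Finset.prod_mul_distrib, Finset.prod_const, ← Real.exp_sum]
  congr 1
  · simp
  · congr 1
    rw [← Finset.sum_div]
    congr 1
    rw [← Finset.sum_neg_distrib]

lemma gauss_expectation (ν : Fin H → ℝ) (T A : Matrix (Fin H) (Fin H) ℝ)
    (hA : A * Aᵀ = T) (hdet : A.det ≠ 0) (f : (Fin H → ℝ) → ℝ) :
    ∫ z : Fin H → ℝ, gaussPdfMulti ν T z * f z
      = ∫ u : Fin H → ℝ,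
          (∏ h, ((Real.sqrt (2 * π))⁻¹ * Real.exp (-(u h) ^ 2 / 2))) * f (ν + A.mulVec u) := by
  rw [integral_comp_affine A hdet ν (fun z => gaussPdfMulti ν T z * f z)]
  rw [← MeasureTheory.integral_const_mul]
  congr 1 with u
  rw [gausspdf_comp A T hA hdet, prod_gauss_eq]
  rw [← mul_assoc, ← mul_assoc, det_factor A T hA hdet]

lemma gauss_integrable (ν : Fin H → ℝ) (T A : Matrix (Fin H) (Fin H) ℝ)
    (hA : A * Aᵀ = T) (hdet : A.det ≠ 0) (f : (Fin H → ℝ) → ℝ)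
    (h : Integrable fun u : Fin H → ℝ =>
      (∏ h, ((Real.sqrt (2 * π))⁻¹ * Real.exp (-(u h) ^ 2 / 2))) * f (ν + A.mulVec u)) :
    Integrable fun z : Fin H → ℝ => gaussPdfMulti ν T z * f z := by
  apply integrable_comp_affine A hdet ν
  have h2 := h.const_mul (|A.det|⁻¹)
  refine h2.congr (Eventually.of_forall fun u => ?_)
  dsimp only
  rw [gausspdf_comp A T hA hdet, prod_gauss_eq, ← det_factor A T hA hdet]
  have habs : |A.det| ≠ 0 := by simpa using hdet
  generalize (Real.sqrt ((2 * π) ^ (H : ℕ) * T.det))⁻¹ = C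
  generalize Real.exp (-(∑ i, u i ^ 2) / 2) = E
  generalize f (ν + A.mulVec u) = F
  field_simp

noncomputable def g1 (t : ℝ) : ℝ := (Real.sqrt (2 * π))⁻¹ * Real.exp (-t ^ 2 / 2)

lemma sqrt2pi_pos : 0 < Real.sqrt (2 * π) := Real.sqrt_pos.2 (by positivity)

lemma integrable_g1 : Integrable g1 := integrable_gauss.const_mul _

lemma int_g1 : ∫ t : ℝ, g1 t = 1 := by
  unfold g1
  rw [MeasureTheory.integral_const_mul, int_gauss, inv_mul_cancel₀ sqrt2pi_pos.ne']

lemma integrable_g1_mul : Integrable fun t : ℝ => g1 t * t := by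
  have := integrable_mul_gauss.const_mul (Real.sqrt (2 * π))⁻¹
  refine this.congr (Eventually.of_forall fun t => ?_)
  unfold g1; dsimp only; ring

lemma int_g1_mul : ∫ t : ℝ, g1 t * t = 0 := by
  unfold g1
  have : ∀ t : ℝ, (Real.sqrt (2 * π))⁻¹ * Real.exp (-t ^ 2 / 2) * t
      = (Real.sqrt (2 * π))⁻¹ * (t * Real.exp (-t ^ 2 / 2)) := fun t => by ring
  simp_rw [this]
  rw [MeasureTheory.integral_const_mul, int_mul_gauss, mul_zero]

lemma integrable_g1_sq : Integrable fun t : ℝ => g1 t * t ^ 2 := by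
  have := integrable_sq_mul_gauss.const_mul (Real.sqrt (2 * π))⁻¹
  refine this.congr (Eventually.of_forall fun t => ?_)
  unfold g1; dsimp only; ring

lemma int_g1_sq : ∫ t : ℝ, g1 t * t ^ 2 = 1 := by
  unfold g1
  have : ∀ t : ℝ, (Real.sqrt (2 * π))⁻¹ * Real.exp (-t ^ 2 / 2) * t ^ 2
      = (Real.sqrt (2 * π))⁻¹ * (t ^ 2 * Real.exp (-t ^ 2 / 2)) := fun t => by ring
  simp_rw [this]
  rw [MeasureTheory.integral_const_mul, int_sq_mul_gauss, inv_mul_cancel₀ sqrt2pi_pos.ne']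

lemma integrable_g1_abs (m s : ℝ) : Integrable fun t : ℝ => g1 t * |m + s * t| := by
  have := (integrable_abs_gauss m s).const_mul (Real.sqrt (2 * π))⁻¹
  refine this.congr (Eventually.of_forall fun t => ?_)
  unfold g1; dsimp only; ring

lemma int_g1_abs (m s : ℝ) (hs : 0 < s) :
    ∫ t : ℝ, g1 t * |m + s * t| = s * Mfun (m / s) := by
  unfold g1
  have : ∀ t : ℝ, (Real.sqrt (2 * π))⁻¹ * Real.exp (-t ^ 2 / 2) * |m + s * t|
      = (Real.sqrt (2 * π))⁻¹ * (|m + s * t| * Real.exp (-t ^ 2 / 2)) := fun t => by ring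
  simp_rw [this]
  rw [MeasureTheory.integral_const_mul, int_abs_gauss m s hs, ← mul_assoc,
    inv_mul_cancel₀ sqrt2pi_pos.ne', one_mul]

section PiMoments

variable {H : ℕ}

/-- generic product integrability -/
lemma pi_integrable (b : Fin H → ℝ → ℝ)
    (hb : ∀ h, Integrable fun t : ℝ => g1 t * b h t) :
    Integrable fun u : Fin H → ℝ => ∏ h, (g1 (u h) * b h (u h)) :=
  Integrable.fintype_prod_dep (f := fun h (t : ℝ) => g1 t * b h t) hb

lemma pi_integral (b : Fin H → ℝ → ℝ) :
    ∫ u : Fin H → ℝ, ∏ h, (g1 (u h) * b h (u h)) = ∏ h, ∫ t : ℝ, g1 t * b h t :=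
  MeasureTheory.integral_fintype_prod_volume_eq_prod (f := fun h (t : ℝ) => g1 t * b h t)


lemma prod_ite_single (j : Fin H) (v : Fin H → ℝ) :
    ∏ h, (if h = j then v h else 1) = v j := by
  classical
  simp

/-- `Φ u = ∏ h, g1 (u h)` integrability and moments -/
lemma phi_integrable : Integrable fun u : Fin H → ℝ => ∏ h, g1 (u h) := by
  have := pi_integrable (H := H) (fun _ => fun _ => (1:ℝ)) (fun h => by simpa using integrable_g1)
  refine this.congr (Eventually.of_forall fun u => ?_)
  simp

lemma phi_int : ∫ u : Fin H → ℝ, ∏ h, g1 (u h) = 1 := by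
  have h := pi_integral (H := H) (fun _ => fun _ => (1:ℝ))
  simp only [mul_one] at h
  rw [h]
  rw [Finset.prod_congr rfl fun h _ => int_g1]
  simp

lemma phi_mom1_eq (j : Fin H) (u : Fin H → ℝ) :
    (∏ h, g1 (u h)) * u j = ∏ h, (g1 (u h) * (if h = j then u h else 1)) := by
  rw [Finset.prod_mul_distrib]
  congr 1
  exact (prod_ite_single j u).symm

lemma phi_mom1_integrable (j : Fin H) :
    Integrable fun u : Fin H → ℝ => (∏ h, g1 (u h)) * u j := by
  have := pi_integrable (fun h t => if h = j then t else 1) (fun h => by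
    by_cases hh : h = j <;> simp [hh, integrable_g1_mul, integrable_g1])
  refine this.congr (Eventually.of_forall fun u => ?_)
  dsimp only
  rw [← phi_mom1_eq]

lemma phi_mom1 (j : Fin H) : ∫ u : Fin H → ℝ, (∏ h, g1 (u h)) * u j = 0 := by
  simp_rw [phi_mom1_eq j]
  rw [pi_integral (fun h t => if h = j then t else 1)]
  apply Finset.prod_eq_zero (Finset.mem_univ j)
  simp [int_g1_mul]

lemma phi_mom2_eq (j k : Fin H) (hjk : j ≠ k) (u : Fin H → ℝ) :
    (∏ h, g1 (u h)) * (u j * u k)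
      = ∏ h, (g1 (u h) * (if h = j then u h else if h = k then u h else 1)) := by
  classical
  rw [Finset.prod_mul_distrib]
  congr 1
  have hsub : ({j, k} : Finset (Fin H)) ⊆ Finset.univ := Finset.subset_univ _
  rw [← Finset.prod_subset hsub (fun x _ hx => by
    simp only [Finset.mem_insert, Finset.mem_singleton] at hx
    push_neg at hx
    simp [hx.1, hx.2])]
  rw [Finset.prod_pair hjk]
  simp [Ne.symm hjk]

lemma phi_mom2_off_integrable (j k : Fin H) (hjk : j ≠ k) :
    Integrable fun u : Fin H → ℝ => (∏ h, g1 (u h)) * (u j * u k) := by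
  have := pi_integrable (fun h t => if h = j then t else if h = k then t else 1) (fun h => by
    by_cases h1 : h = j
    · simpa [h1] using integrable_g1_mul
    · by_cases h2 : h = k
      · simpa [h1, h2] using integrable_g1_mul
      · simpa [h1, h2] using integrable_g1)
  refine this.congr (Eventually.of_forall fun u => ?_)
  dsimp only
  rw [← phi_mom2_eq j k hjk]

lemma phi_mom2_off (j k : Fin H) (hjk : j ≠ k) :
    ∫ u : Fin H → ℝ, (∏ h, g1 (u h)) * (u j * u k) = 0 := by
  simp_rw [phi_mom2_eq j k hjk]
  rw [pi_integral (fun h t => if h = j then t else if h = k then t else 1)]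
  apply Finset.prod_eq_zero (Finset.mem_univ j)
  simp [int_g1_mul]

lemma phi_mom2_diag_eq (j : Fin H) (u : Fin H → ℝ) :
    (∏ h, g1 (u h)) * (u j * u j)
      = ∏ h, (g1 (u h) * (if h = j then u h ^ 2 else 1)) := by
  rw [Finset.prod_mul_distrib, prod_ite_single j (fun h => u h ^ 2)]
  ring

lemma phi_mom2_diag_integrable (j : Fin H) :
    Integrable fun u : Fin H → ℝ => (∏ h, g1 (u h)) * (u j * u j) := by
  have := pi_integrable (fun h t => if h = j then t ^ 2 else 1) (fun h => by
    by_cases h1 : h = j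
    · simpa [h1] using integrable_g1_sq
    · simpa [h1] using integrable_g1)
  refine this.congr (Eventually.of_forall fun u => ?_)
  dsimp only
  rw [← phi_mom2_diag_eq j]

lemma phi_mom2_diag (j : Fin H) :
    ∫ u : Fin H → ℝ, (∏ h, g1 (u h)) * (u j * u j) = 1 := by
  simp_rw [phi_mom2_diag_eq j]
  rw [pi_integral (fun h t => if h = j then t ^ 2 else 1)]
  have : ∀ h : Fin H, (∫ t : ℝ, g1 t * (if h = j then t ^ 2 else 1)) = 1 := by
    intro h
    by_cases h1 : h = j
    · simpa [h1] using int_g1_sq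
    · simpa [h1] using int_g1
  rw [Finset.prod_congr rfl fun h _ => this h]
  simp

lemma phi_mom2_integrable (j k : Fin H) :
    Integrable fun u : Fin H → ℝ => (∏ h, g1 (u h)) * (u j * u k) := by
  by_cases hjk : j = k
  · subst hjk; exact phi_mom2_diag_integrable j
  · exact phi_mom2_off_integrable j k hjk

lemma phi_mom2 (j k : Fin H) :
    ∫ u : Fin H → ℝ, (∏ h, g1 (u h)) * (u j * u k) = if j = k then 1 else 0 := by
  by_cases hjk : j = k
  · subst hjk; simp [phi_mom2_diag j]
  · simp [hjk, phi_mom2_off j k hjk]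

lemma phi_abs_eq (j : Fin H) (m s : ℝ) (u : Fin H → ℝ) :
    (∏ h, g1 (u h)) * |m + s * u j|
      = ∏ h, (g1 (u h) * (if h = j then |m + s * u h| else 1)) := by
  rw [Finset.prod_mul_distrib, prod_ite_single j (fun h => |m + s * u h|)]

lemma phi_abs_integrable (j : Fin H) (m s : ℝ) :
    Integrable fun u : Fin H → ℝ => (∏ h, g1 (u h)) * |m + s * u j| := by
  have := pi_integrable (fun h t => if h = j then |m + s * t| else 1) (fun h => by
    by_cases h1 : h = j
    · simpa [h1] using integrable_g1_abs m s
    · simpa [h1] using integrable_g1)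
  refine this.congr (Eventually.of_forall fun u => ?_)
  dsimp only
  rw [← phi_abs_eq j m s]

lemma phi_abs (j : Fin H) (m s : ℝ) (hs : 0 < s) :
    ∫ u : Fin H → ℝ, (∏ h, g1 (u h)) * |m + s * u j| = s * Mfun (m / s) := by
  simp_rw [phi_abs_eq j m s]
  rw [pi_integral (fun h t => if h = j then |m + s * t| else 1)]
  classical
  have : ∀ h : Fin H, (∫ t : ℝ, g1 t * (if h = j then |m + s * t| else 1))
      = if h = j then s * Mfun (m / s) else 1 := by
    intro h
    by_cases h1 : h = j
    · simpa [h1] using int_g1_abs m s hs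
    · simpa [h1] using int_g1
  rw [Finset.prod_congr rfl fun h _ => this h]
  rw [prod_ite_single j (fun _ => s * Mfun (m / s))]

end PiMoments

section LinQuad

variable {H : ℕ}

lemma lin_moment_integrable (c : Fin H → ℝ) :
    Integrable fun u : Fin H → ℝ => (∏ h, g1 (u h)) * (∑ p, c p * u p) := by
  have : ∀ u : Fin H → ℝ, (∏ h, g1 (u h)) * (∑ p, c p * u p)
      = ∑ p, c p * ((∏ h, g1 (u h)) * u p) := by
    intro u
    rw [Finset.mul_sum]
    congr 1 with p
    ring
  simp_rw [this]
  exact integrable_finset_sum _ fun p _ => (phi_mom1_integrable p).const_mul _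

lemma lin_moment (c : Fin H → ℝ) :
    ∫ u : Fin H → ℝ, (∏ h, g1 (u h)) * (∑ p, c p * u p) = 0 := by
  have : ∀ u : Fin H → ℝ, (∏ h, g1 (u h)) * (∑ p, c p * u p)
      = ∑ p, c p * ((∏ h, g1 (u h)) * u p) := by
    intro u
    rw [Finset.mul_sum]
    congr 1 with p
    ring
  simp_rw [this]
  rw [integral_finset_sum _ fun p _ => (phi_mom1_integrable p).const_mul _]
  simp [MeasureTheory.integral_const_mul, phi_mom1]

lemma quad_moment_integrable (c d : Fin H → ℝ) :
    Integrable fun u : Fin H → ℝ =>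
      (∏ h, g1 (u h)) * ((∑ p, c p * u p) * (∑ q, d q * u q)) := by
  have : ∀ u : Fin H → ℝ, (∏ h, g1 (u h)) * ((∑ p, c p * u p) * (∑ q, d q * u q))
      = ∑ p, ∑ q, (c p * d q) * ((∏ h, g1 (u h)) * (u p * u q)) := by
    intro u
    rw [Finset.sum_mul_sum, Finset.mul_sum]
    congr 1 with p
    rw [Finset.mul_sum]
    congr 1 with q
    ring
  simp_rw [this]
  exact integrable_finset_sum _ fun p _ =>
    integrable_finset_sum _ fun q _ => (phi_mom2_integrable p q).const_mul _

lemma quad_moment (c d : Fin H → ℝ) :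
    ∫ u : Fin H → ℝ, (∏ h, g1 (u h)) * ((∑ p, c p * u p) * (∑ q, d q * u q))
      = ∑ p, c p * d p := by
  have : ∀ u : Fin H → ℝ, (∏ h, g1 (u h)) * ((∑ p, c p * u p) * (∑ q, d q * u q))
      = ∑ p, ∑ q, (c p * d q) * ((∏ h, g1 (u h)) * (u p * u q)) := by
    intro u
    rw [Finset.sum_mul_sum, Finset.mul_sum]
    congr 1 with p
    rw [Finset.mul_sum]
    congr 1 with q
    ring
  simp_rw [this]
  rw [integral_finset_sum _ fun p _ =>
    integrable_finset_sum _ fun q _ => (phi_mom2_integrable p q).const_mul _]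
  have hq : ∀ p, ∫ u : Fin H → ℝ, ∑ q, (c p * d q) * ((∏ h, g1 (u h)) * (u p * u q))
      = c p * d p := by
    intro p
    rw [integral_finset_sum _ fun q _ => (phi_mom2_integrable p q).const_mul _]
    have : ∀ q, ∫ u : Fin H → ℝ, (c p * d q) * ((∏ h, g1 (u h)) * (u p * u q))
        = (c p * d q) * (if p = q then (1:ℝ) else 0) := by
      intro q
      rw [MeasureTheory.integral_const_mul, phi_mom2]
    rw [Finset.sum_congr rfl fun q _ => this q]
    simp
  rw [Finset.sum_congr rfl fun p _ => hq p]

lemma sq_lin_integrable (r : ℝ) (c : Fin H → ℝ) :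
    Integrable fun u : Fin H → ℝ => (∏ h, g1 (u h)) * (r - ∑ p, c p * u p) ^ 2 := by
  have : ∀ u : Fin H → ℝ, (∏ h, g1 (u h)) * (r - ∑ p, c p * u p) ^ 2
      = r ^ 2 * (∏ h, g1 (u h)) + (-2 * r) * ((∏ h, g1 (u h)) * (∑ p, c p * u p))
        + (∏ h, g1 (u h)) * ((∑ p, c p * u p) * (∑ q, c q * u q)) := by
    intro u
    ring
  simp_rw [this]
  exact ((phi_integrable.const_mul _).add ((lin_moment_integrable c).const_mul _)).add
    (quad_moment_integrable c c)

lemma sq_lin_int (r : ℝ) (c : Fin H → ℝ) :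
    ∫ u : Fin H → ℝ, (∏ h, g1 (u h)) * (r - ∑ p, c p * u p) ^ 2
      = r ^ 2 + ∑ p, c p ^ 2 := by
  have : ∀ u : Fin H → ℝ, (∏ h, g1 (u h)) * (r - ∑ p, c p * u p) ^ 2
      = r ^ 2 * (∏ h, g1 (u h)) + (-2 * r) * ((∏ h, g1 (u h)) * (∑ p, c p * u p))
        + (∏ h, g1 (u h)) * ((∑ p, c p * u p) * (∑ q, c q * u q)) := by
    intro u
    ring
  simp_rw [this]
  have h1 : Integrable (fun u : Fin H → ℝ => r ^ 2 * (∏ h, g1 (u h))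
      + (-2 * r) * ((∏ h, g1 (u h)) * (∑ p, c p * u p))) :=
    (phi_integrable.const_mul _).add ((lin_moment_integrable c).const_mul _)
  have e1 := MeasureTheory.integral_add (μ := volume)
    (f := fun u : Fin H → ℝ => r ^ 2 * (∏ h, g1 (u h))
      + (-2 * r) * ((∏ h, g1 (u h)) * (∑ p, c p * u p)))
    (g := fun u : Fin H → ℝ => (∏ h, g1 (u h)) * ((∑ p, c p * u p) * (∑ q, c q * u q)))
    h1 (quad_moment_integrable c c)
  have e2 := MeasureTheory.integral_add (μ := volume)
    (f := fun u : Fin H → ℝ => r ^ 2 * (∏ h, g1 (u h)))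
    (g := fun u : Fin H → ℝ => (-2 * r) * ((∏ h, g1 (u h)) * (∑ p, c p * u p)))
    (phi_integrable.const_mul _) ((lin_moment_integrable c).const_mul _)
  rw [e1, e2, MeasureTheory.integral_const_mul, MeasureTheory.integral_const_mul,
    phi_int, lin_moment, quad_moment]
  have : ∀ p, c p * c p = c p ^ 2 := fun p => (sq (c p)).symm
  rw [Finset.sum_congr rfl fun p _ => this p]
  ring

end LinQuad

section ZLevel

variable {D H : ℕ}

lemma exists_factor_plain (T : Matrix (Fin H) (Fin H) ℝ) (hT : T.PosDef) :
    ∃ B : Matrix (Fin H) (Fin H) ℝ, B * Bᵀ = T ∧ B.det ≠ 0 := by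
  refine ⟨hT.posSemidef.sqrt, ?_, ?_⟩
  · have hsy : (hT.posSemidef.sqrt)ᵀ = hT.posSemidef.sqrt := by
      rw [← conjTranspose_eq_transpose_of_trivial]
      exact hT.posSemidef.posSemidef_sqrt.1
    rw [hsy, hT.posSemidef.sqrt_mul_self]
  · intro hd
    have := hT.det_pos
    rw [← hT.posSemidef.sqrt_mul_self, det_mul, hd, mul_zero] at this
    exact lt_irrefl _ this

variable (ν : Fin H → ℝ) (T : Matrix (Fin H) (Fin H) ℝ)

lemma gauss_expectation_g1 (A : Matrix (Fin H) (Fin H) ℝ)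
    (hA : A * Aᵀ = T) (hdet : A.det ≠ 0) (f : (Fin H → ℝ) → ℝ) :
    ∫ z : Fin H → ℝ, gaussPdfMulti ν T z * f z
      = ∫ u : Fin H → ℝ, (∏ h, g1 (u h)) * f (ν + A.mulVec u) := by
  unfold g1
  exact gauss_expectation ν T A hA hdet f

lemma gauss_integrable_g1 (A : Matrix (Fin H) (Fin H) ℝ)
    (hA : A * Aᵀ = T) (hdet : A.det ≠ 0) (f : (Fin H → ℝ) → ℝ)
    (h : Integrable fun u : Fin H → ℝ => (∏ h, g1 (u h)) * f (ν + A.mulVec u)) :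
    Integrable fun z : Fin H → ℝ => gaussPdfMulti ν T z * f z := by
  apply gauss_integrable ν T A hA hdet f
  unfold g1 at h
  exact h

lemma integrable_g (hT : T.PosDef) : Integrable (gaussPdfMulti ν T) := by
  obtain ⟨A, hA, hdet⟩ := exists_factor_plain T hT
  have h := gauss_integrable_g1 ν T A hA hdet (fun _ => 1) ?_
  · refine h.congr (Eventually.of_forall fun z => ?_)
    dsimp only
    rw [mul_one]
  · refine phi_integrable.congr (Eventually.of_forall fun u => ?_)
    dsimp only
    rw [mul_one]

lemma int_g (hT : T.PosDef) : ∫ z : Fin H → ℝ, gaussPdfMulti ν T z = 1 := by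
  obtain ⟨A, hA, hdet⟩ := exists_factor_plain T hT
  have h := gauss_expectation_g1 ν T A hA hdet (fun _ => 1)
  simp only [mul_one] at h
  rw [h, phi_int]

lemma uq_pt (u : Fin H → ℝ) : (∏ h, g1 (u h)) * (∑ i, u i ^ 2)
    = ∑ i, (∏ h, g1 (u h)) * (u i * u i) := by
  rw [Finset.mul_sum]
  congr 1 with i
  ring

lemma integrable_gq (hT : T.PosDef) :
    Integrable fun z : Fin H → ℝ => gaussPdfMulti ν T z *
      (∑ i, (z i - ν i) * (T⁻¹.mulVec fun j => z j - ν j) i) := by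
  obtain ⟨A, hA, hdet⟩ := exists_factor_plain T hT
  apply gauss_integrable_g1 ν T A hA hdet
    (fun z => ∑ i, (z i - ν i) * (T⁻¹.mulVec fun j => z j - ν j) i)
  have hint : Integrable fun u : Fin H → ℝ => ∑ i, (∏ h, g1 (u h)) * (u i * u i) :=
    integrable_finset_sum _ fun i _ => phi_mom2_diag_integrable i
  refine hint.congr (Eventually.of_forall fun u => ?_)
  dsimp only
  rw [quad_comp A T hA hdet ν u, uq_pt]

lemma int_gq (hT : T.PosDef) :
    ∫ z : Fin H → ℝ, gaussPdfMulti ν T z *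
      (∑ i, (z i - ν i) * (T⁻¹.mulVec fun j => z j - ν j) i) = (H : ℝ) := by
  obtain ⟨A, hA, hdet⟩ := exists_factor_plain T hT
  rw [gauss_expectation_g1 ν T A hA hdet
    (fun z => ∑ i, (z i - ν i) * (T⁻¹.mulVec fun j => z j - ν j) i)]
  have hpt : ∀ u : Fin H → ℝ,
      (∏ h, g1 (u h)) * (∑ i, ((ν + A.mulVec u) i - ν i) *
        (T⁻¹.mulVec fun j => (ν + A.mulVec u) j - ν j) i)
      = ∑ i, (∏ h, g1 (u h)) * (u i * u i) := by
    intro u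
    rw [quad_comp A T hA hdet ν u, uq_pt]
  simp_rw [hpt]
  rw [integral_finset_sum _ fun i _ => phi_mom2_diag_integrable i]
  simp [phi_mom2_diag]

lemma trace_lemma (W : Matrix (Fin D) (Fin H) ℝ) (A : Matrix (Fin H) (Fin H) ℝ)
    (hA : A * Aᵀ = T) :
    Matrix.trace (Wᵀ * W * T) = ∑ i, ∑ p, (W * A) i p ^ 2 := by
  rw [← hA]
  have h1 : Wᵀ * W * (A * Aᵀ) = (Wᵀ * W * A) * Aᵀ := (Matrix.mul_assoc (Wᵀ * W) A Aᵀ).symm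
  rw [h1, ← trace_mul_comm]
  have h2 : Aᵀ * (Wᵀ * W * A) = (W * A)ᵀ * (W * A) := by
    rw [transpose_mul, Matrix.mul_assoc Wᵀ W A, ← Matrix.mul_assoc]
  rw [h2]
  have h3 : ∀ p, ((W * A)ᵀ * (W * A)) p p = ∑ i, (W * A) i p ^ 2 := by
    intro p
    rw [mul_apply]
    apply Finset.sum_congr rfl
    intro i _
    rw [transpose_apply]
    ring
  rw [Matrix.trace]
  have h4 : ∀ p, ((W * A)ᵀ * (W * A)).diag p = ∑ i, (W * A) i p ^ 2 := by
    intro p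
    rw [Matrix.diag_apply]
    exact h3 p
  rw [Finset.sum_congr rfl fun p _ => h4 p, Finset.sum_comm]

lemma hW_comp (W : Matrix (Fin D) (Fin H) ℝ) (A : Matrix (Fin H) (Fin H) ℝ)
    (u : Fin H → ℝ) (i : Fin D) :
    W.mulVec (ν + A.mulVec u) i = W.mulVec ν i + ∑ p, (W * A) i p * u p := by
  rw [mulVec_add, Pi.add_apply, mulVec_mulVec]
  rfl

lemma hS_comp (x : Fin D → ℝ) (W : Matrix (Fin D) (Fin H) ℝ) (A : Matrix (Fin H) (Fin H) ℝ)
    (u : Fin H → ℝ) :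
    (∑ i, (x i - W.mulVec (ν + A.mulVec u) i) ^ 2)
      = ∑ i, ((x i - W.mulVec ν i) - ∑ p, (W * A) i p * u p) ^ 2 := by
  apply Finset.sum_congr rfl
  intro i _
  rw [hW_comp ν W A u i]
  ring

lemma uS_pt (r : Fin D → ℝ) (M : Matrix (Fin D) (Fin H) ℝ) (u : Fin H → ℝ) :
    (∏ h, g1 (u h)) * (∑ i, (r i - ∑ p, M i p * u p) ^ 2)
      = ∑ i, (∏ h, g1 (u h)) * (r i - ∑ p, M i p * u p) ^ 2 := by
  rw [Finset.mul_sum]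

lemma integrable_gS (x : Fin D → ℝ) (W : Matrix (Fin D) (Fin H) ℝ) (hT : T.PosDef) :
    Integrable fun z : Fin H → ℝ => gaussPdfMulti ν T z *
      (∑ i, (x i - W.mulVec z i) ^ 2) := by
  obtain ⟨A, hA, hdet⟩ := exists_factor_plain T hT
  apply gauss_integrable_g1 ν T A hA hdet (fun z => ∑ i, (x i - W.mulVec z i) ^ 2)
  have hint : Integrable fun u : Fin H → ℝ =>
      ∑ i, (∏ h, g1 (u h)) * ((x i - W.mulVec ν i) - ∑ p, (W * A) i p * u p) ^ 2 :=
    integrable_finset_sum _ fun i _ => sq_lin_integrable _ _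
  refine hint.congr (Eventually.of_forall fun u => ?_)
  dsimp only
  rw [hS_comp ν x W A u, uS_pt]

lemma int_gS (x : Fin D → ℝ) (W : Matrix (Fin D) (Fin H) ℝ) (hT : T.PosDef) :
    ∫ z : Fin H → ℝ, gaussPdfMulti ν T z * (∑ i, (x i - W.mulVec z i) ^ 2)
      = Matrix.trace (Wᵀ * W * T) + ∑ i, (W.mulVec ν i - x i) ^ 2 := by
  obtain ⟨A, hA, hdet⟩ := exists_factor_plain T hT
  rw [gauss_expectation_g1 ν T A hA hdet (fun z => ∑ i, (x i - W.mulVec z i) ^ 2)]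
  have hpt : ∀ u : Fin H → ℝ,
      (∏ h, g1 (u h)) * (∑ i, (x i - W.mulVec (ν + A.mulVec u) i) ^ 2)
      = ∑ i, (∏ h, g1 (u h)) * ((x i - W.mulVec ν i) - ∑ p, (W * A) i p * u p) ^ 2 := by
    intro u
    rw [hS_comp ν x W A u, uS_pt]
  simp_rw [hpt]
  rw [integral_finset_sum _ fun i _ =>
    sq_lin_integrable (x i - W.mulVec ν i) (fun p => (W * A) i p)]
  rw [Finset.sum_congr rfl fun i _ => sq_lin_int (x i - W.mulVec ν i) (fun p => (W * A) i p)]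
  rw [Finset.sum_add_distrib, trace_lemma T W A hA]
  rw [add_comm]
  congr 1
  apply Finset.sum_congr rfl
  intro i _
  ring

lemma abs_row_comp (A : Matrix (Fin H) (Fin H) ℝ) (h : Fin H)
    (hrow : ∀ j, A h j = if j = h then Real.sqrt (T h h) else 0) (u : Fin H → ℝ) :
    (ν + A.mulVec u) h = ν h + Real.sqrt (T h h) * u h := by
  rw [Pi.add_apply]
  congr 1
  have : A.mulVec u h = ∑ j, A h j * u j := rfl
  rw [this, Finset.sum_congr rfl fun j _ => by rw [hrow j]]
  simp

lemma integrable_gabs (hT : T.PosDef) (hdiag : ∀ h, 0 < T h h) (h : Fin H) :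
    Integrable fun z : Fin H → ℝ => gaussPdfMulti ν T z * |z h| := by
  obtain ⟨A, hA, hdet, hrow⟩ := exists_factor T hT h
  apply gauss_integrable_g1 ν T A hA hdet (fun z => |z h|)
  have hint := phi_abs_integrable (H := H) h (ν h) (Real.sqrt (T h h))
  refine hint.congr (Eventually.of_forall fun u => ?_)
  dsimp only
  rw [abs_row_comp ν T A h hrow u]

lemma int_gabs (hT : T.PosDef) (hdiag : ∀ h, 0 < T h h) (h : Fin H) :
    ∫ z : Fin H → ℝ, gaussPdfMulti ν T z * |z h|
      = Real.sqrt (T h h) * Mfun (ν h / Real.sqrt (T h h)) := by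
  obtain ⟨A, hA, hdet, hrow⟩ := exists_factor T hT h
  rw [gauss_expectation_g1 ν T A hA hdet (fun z => |z h|)]
  have hpt : ∀ u : Fin H → ℝ,
      (∏ h', g1 (u h')) * |(ν + A.mulVec u) h|
      = (∏ h', g1 (u h')) * |ν h + Real.sqrt (T h h) * u h| := by
    intro u
    rw [abs_row_comp ν T A h hrow u]
  simp_rw [hpt]
  exact phi_abs h (ν h) (Real.sqrt (T h h)) (Real.sqrt_pos.2 (hdiag h))

end ZLevel

section PerN

variable {D H : ℕ}

lemma log_obs (W : Matrix (Fin D) (Fin H) ℝ) (σ2 : ℝ) (hσ2 : 0 < σ2)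
    (x : Fin D → ℝ) (z : Fin H → ℝ) :
    Real.log (gaussObsPdf W σ2 x z)
      = -((D : ℝ) / 2) * Real.log (2 * π * σ2)
        - (∑ i, (x i - W.mulVec z i) ^ 2) / (2 * σ2) := by
  unfold gaussObsPdf
  rw [Real.log_mul (by positivity) (Real.exp_ne_zero _), Real.log_rpow (by positivity),
    Real.log_exp]
  ring

lemma log_prior (z : Fin H → ℝ) :
    Real.log (stdLaplacePdf z) = -(H : ℝ) * Real.log 2 - ∑ h, |z h| := by
  unfold stdLaplacePdf
  rw [Real.log_prod (fun h _ => by positivity)]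
  have : ∀ h : Fin H, Real.log ((1 / 2 : ℝ) * Real.exp (-|z h|))
      = -Real.log 2 + -|z h| := by
    intro h
    rw [Real.log_mul (by norm_num) (Real.exp_ne_zero _), Real.log_exp, one_div, Real.log_inv]
  rw [Finset.sum_congr rfl fun h _ => this h, Finset.sum_add_distrib]
  simp [Finset.sum_neg_distrib]
  ring

lemma log_g (ν : Fin H → ℝ) (T : Matrix (Fin H) (Fin H) ℝ) (hT : T.PosDef) (z : Fin H → ℝ) :
    Real.log (gaussPdfMulti ν T z)
      = -Real.log (Real.sqrt ((2 * π) ^ (H : ℕ) * T.det))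
        - (∑ i, (z i - ν i) * (T⁻¹.mulVec fun j => z j - ν j) i) / 2 := by
  unfold gaussPdfMulti
  have hpos : (0:ℝ) < Real.sqrt ((2 * π) ^ (H : ℕ) * T.det) :=
    Real.sqrt_pos.2 (mul_pos (by positivity) hT.det_pos)
  rw [Real.log_mul (by positivity) (Real.exp_ne_zero _), Real.log_inv, Real.log_exp]
  ring

lemma elbo_per (x : Fin D → ℝ) (W : Matrix (Fin D) (Fin H) ℝ) (σ2 : ℝ) (hσ2 : 0 < σ2)
    (ν : Fin H → ℝ) (T : Matrix (Fin H) (Fin H) ℝ) (hT : T.PosDef)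
    (hdiag : ∀ h, 0 < T h h) :
    ∫ z : Fin H → ℝ, gaussPdfMulti ν T z *
        (Real.log (gaussObsPdf W σ2 x z) + Real.log (stdLaplacePdf z) -
          Real.log (gaussPdfMulti ν T z))
      = -((D : ℝ) / 2) * Real.log (2 * π * σ2)
        - (1 / (2 * σ2)) * (Matrix.trace (Wᵀ * W * T) + ∑ i, (W.mulVec ν i - x i) ^ 2)
        - (H : ℝ) * Real.log 2
        - (∑ h, Real.sqrt (T h h) * Mfun (ν h / Real.sqrt (T h h)))
        + (1 / 2 : ℝ) * Real.log ((2 * π * Real.exp 1) • T).det := by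
  have hdetpos := hT.det_pos
  have hprodpos : (0:ℝ) < (2 * π) ^ (H : ℕ) * T.det := mul_pos (by positivity) hdetpos
  have hpt : ∀ z : Fin H → ℝ, gaussPdfMulti ν T z *
        (Real.log (gaussObsPdf W σ2 x z) + Real.log (stdLaplacePdf z) -
          Real.log (gaussPdfMulti ν T z))
      = (-((D : ℝ) / 2) * Real.log (2 * π * σ2) - (H : ℝ) * Real.log 2
          + Real.log (Real.sqrt ((2 * π) ^ (H : ℕ) * T.det))) * gaussPdfMulti ν T z
        + (-(1 / (2 * σ2))) * (gaussPdfMulti ν T z * (∑ i, (x i - W.mulVec z i) ^ 2))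
        + (-1 : ℝ) * (gaussPdfMulti ν T z * (∑ h, |z h|))
        + (1 / 2 : ℝ) * (gaussPdfMulti ν T z *
            (∑ i, (z i - ν i) * (T⁻¹.mulVec fun j => z j - ν j) i)) := by
    intro z
    rw [log_obs W σ2 hσ2 x z, log_prior z, log_g ν T hT z]
    field_simp
    ring
  simp only [hpt]
  have i1 : Integrable fun z : Fin H → ℝ =>
      (-((D : ℝ) / 2) * Real.log (2 * π * σ2) - (H : ℝ) * Real.log 2
        + Real.log (Real.sqrt ((2 * π) ^ (H : ℕ) * T.det))) * gaussPdfMulti ν T z :=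
    (integrable_g ν T hT).const_mul _
  have i2 : Integrable fun z : Fin H → ℝ =>
      (-(1 / (2 * σ2))) * (gaussPdfMulti ν T z * (∑ i, (x i - W.mulVec z i) ^ 2)) :=
    (integrable_gS ν T x W hT).const_mul _
  have iabs : Integrable fun z : Fin H → ℝ => gaussPdfMulti ν T z * (∑ h, |z h|) := by
    have : ∀ z : Fin H → ℝ, gaussPdfMulti ν T z * (∑ h, |z h|)
        = ∑ h, gaussPdfMulti ν T z * |z h| := fun z => Finset.mul_sum _ _ _
    simp only [this]
    exact integrable_finset_sum _ fun h _ => integrable_gabs ν T hT hdiag h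
  have i3 : Integrable fun z : Fin H → ℝ =>
      (-1 : ℝ) * (gaussPdfMulti ν T z * (∑ h, |z h|)) := iabs.const_mul _
  have i4 : Integrable fun z : Fin H → ℝ =>
      (1 / 2 : ℝ) * (gaussPdfMulti ν T z *
        (∑ i, (z i - ν i) * (T⁻¹.mulVec fun j => z j - ν j) i)) :=
    (integrable_gq ν T hT).const_mul _
  have e1 := MeasureTheory.integral_add (μ := volume)
    (f := fun z : Fin H → ℝ =>
      (-((D : ℝ) / 2) * Real.log (2 * π * σ2) - (H : ℝ) * Real.log 2
        + Real.log (Real.sqrt ((2 * π) ^ (H : ℕ) * T.det))) * gaussPdfMulti ν T z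
      + (-(1 / (2 * σ2))) * (gaussPdfMulti ν T z * (∑ i, (x i - W.mulVec z i) ^ 2))
      + (-1 : ℝ) * (gaussPdfMulti ν T z * (∑ h, |z h|)))
    (g := fun z : Fin H → ℝ => (1 / 2 : ℝ) * (gaussPdfMulti ν T z *
        (∑ i, (z i - ν i) * (T⁻¹.mulVec fun j => z j - ν j) i)))
    ((i1.add i2).add i3) i4
  have e2 := MeasureTheory.integral_add (μ := volume)
    (f := fun z : Fin H → ℝ =>
      (-((D : ℝ) / 2) * Real.log (2 * π * σ2) - (H : ℝ) * Real.log 2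
        + Real.log (Real.sqrt ((2 * π) ^ (H : ℕ) * T.det))) * gaussPdfMulti ν T z
      + (-(1 / (2 * σ2))) * (gaussPdfMulti ν T z * (∑ i, (x i - W.mulVec z i) ^ 2)))
    (g := fun z : Fin H → ℝ => (-1 : ℝ) * (gaussPdfMulti ν T z * (∑ h, |z h|)))
    (i1.add i2) i3
  have e3 := MeasureTheory.integral_add (μ := volume)
    (f := fun z : Fin H → ℝ =>
      (-((D : ℝ) / 2) * Real.log (2 * π * σ2) - (H : ℝ) * Real.log 2
        + Real.log (Real.sqrt ((2 * π) ^ (H : ℕ) * T.det))) * gaussPdfMulti ν T z)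
    (g := fun z : Fin H → ℝ =>
      (-(1 / (2 * σ2))) * (gaussPdfMulti ν T z * (∑ i, (x i - W.mulVec z i) ^ 2)))
    i1 i2
  rw [e1, e2, e3]
  have habsint : ∫ z : Fin H → ℝ, gaussPdfMulti ν T z * (∑ h, |z h|)
      = ∑ h, Real.sqrt (T h h) * Mfun (ν h / Real.sqrt (T h h)) := by
    have : ∀ z : Fin H → ℝ, gaussPdfMulti ν T z * (∑ h, |z h|)
        = ∑ h, gaussPdfMulti ν T z * |z h| := fun z => Finset.mul_sum _ _ _
    simp only [this]
    rw [integral_finset_sum _ fun h _ => integrable_gabs ν T hT hdiag h]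
    exact Finset.sum_congr rfl fun h _ => int_gabs ν T hT hdiag h
  rw [MeasureTheory.integral_const_mul, MeasureTheory.integral_const_mul,
    MeasureTheory.integral_const_mul, MeasureTheory.integral_const_mul,
    int_g ν T hT, int_gS ν T x W hT, int_gq ν T hT, habsint]
  -- now pure algebra with logarithms
  have hlogsqrt : Real.log (Real.sqrt ((2 * π) ^ (H : ℕ) * T.det))
      = ((H : ℝ) * Real.log (2 * π) + Real.log T.det) / 2 := by
    rw [Real.log_sqrt hprodpos.le, Real.log_mul (by positivity) hdetpos.ne', Real.log_pow]
  have hsmul : ((2 * π * Real.exp 1) • T).det = (2 * π * Real.exp 1) ^ (H : ℕ) * T.det := by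
    rw [Matrix.det_smul]
    simp
  have hlogsmul : Real.log ((2 * π * Real.exp 1) • T).det
      = (H : ℝ) * (Real.log (2 * π) + 1) + Real.log T.det := by
    rw [hsmul, Real.log_mul (by positivity) hdetpos.ne', Real.log_pow,
      Real.log_mul (by positivity) (Real.exp_ne_zero 1), Real.log_exp]
  rw [hlogsqrt, hlogsmul]
  ring

end PerN

/-- **Closed form of the classical sparse coding ELBO with Gaussian variational
posteriors.**  The ELBO for the standard Laplace prior and Gaussian observation model,
with Gaussian variational posteriors `q_n = N(nu_n, T_n)` (positive definite `T_n`),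
equals the stated analytic expression. -/
theorem classical_elbo_closed_form
    (N D H : ℕ) (hN : 0 < N)
    (x : Fin N → Fin D → ℝ) (W : Matrix (Fin D) (Fin H) ℝ) (σ2 : ℝ) (hσ2 : 0 < σ2)
    (ν : Fin N → Fin H → ℝ) (T : Fin N → Matrix (Fin H) (Fin H) ℝ)
    (hTpd : ∀ n, (T n).PosDef) (hTdiag : ∀ n h, 0 < T n h h) :
    (1 / N : ℝ) * ∑ n, ∫ z : Fin H → ℝ,
        gaussPdfMulti (ν n) (T n) z *
          (Real.log (gaussObsPdf W σ2 (x n) z) + Real.log (stdLaplacePdf z) -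
            Real.log (gaussPdfMulti (ν n) (T n) z)) =
      -((D : ℝ) / 2) * Real.log (2 * Real.pi * σ2) -
          (1 / (2 * σ2)) * ((1 / N : ℝ) * ∑ n,
            (Matrix.trace (Wᵀ * W * T n) + ∑ i, (W.mulVec (ν n) i - x n i) ^ 2)) -
        (H : ℝ) * Real.log 2 -
        (1 / N : ℝ) * ∑ n, ∑ h,
          Real.sqrt (T n h h) * Mfun (ν n h / Real.sqrt (T n h h)) +
        (1 / N : ℝ) * ∑ n, (1 / 2 : ℝ) * Real.log ((2 * Real.pi * Real.exp 1) • T n).det := by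
  have hper : ∀ n, ∫ z : Fin H → ℝ,
      gaussPdfMulti (ν n) (T n) z *
        (Real.log (gaussObsPdf W σ2 (x n) z) + Real.log (stdLaplacePdf z) -
          Real.log (gaussPdfMulti (ν n) (T n) z))
      = -((D : ℝ) / 2) * Real.log (2 * π * σ2)
        - (1 / (2 * σ2)) * (Matrix.trace (Wᵀ * W * T n) + ∑ i, (W.mulVec (ν n) i - x n i) ^ 2)
        - (H : ℝ) * Real.log 2
        - (∑ h, Real.sqrt (T n h h) * Mfun (ν n h / Real.sqrt (T n h h)))
        + (1 / 2 : ℝ) * Real.log ((2 * π * Real.exp 1) • T n).det :=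
    fun n => elbo_per (x n) W σ2 hσ2 (ν n) (T n) (hTpd n) (hTdiag n)
  rw [Finset.sum_congr rfl fun n _ => hper n]
  rw [Finset.sum_add_distrib, Finset.sum_sub_distrib, Finset.sum_sub_distrib,
    Finset.sum_sub_distrib, Finset.sum_const, Finset.card_univ, Fintype.card_fin,
    Finset.sum_const, Finset.card_univ, Fintype.card_fin, ← Finset.mul_sum]
  have hNne : (N : ℝ) ≠ 0 := Nat.cast_ne_zero.2 hN.ne'
  field_simp
  ring
end
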